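/- arXiv:1905.04853 — 2 statements merged into one kernel-verified Lean document; each statement's English description precedes it below -/
import Mathlib

section
/- Let M = {e_1, …, e_{2d}} (d ≥ 2) be a matching whose intersection graph is the path e_1 — e_2 — ⋯ — e_{2d} (i.e., e_s and e_t intersect iff |s−t| = 1), with e_1 to the left of e_{2d} on the upper line. Then for every t ∈ [d−1], the odd-indexed edges satisfy e_{2t−1} ≺ e_{2t+1}, e_{2t−1} ≺ e_{2t+2}, and e_{2t} ≺ e_{2t+2}. -/
def inter (e f : ℕ × ℕ) : Prop :=
  (e.1 < f.1 ∧ f.2 < e.2) ∨ (f.1 < e.1 ∧ e.2 < f.2)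

def eprec (e f : ℕ × ℕ) : Prop := e.1 < f.1 ∧ e.2 < f.2

/-!
Non-crossing edges with distinct endpoints are `≺`-comparable, while crossing edges never are.
So if `e_s ≺ e_t` and `e_t` crosses `e_{t+1}`, then `e_s ≺ e_{t+1}`, since `e_{t+1} ≺ e_s` would give
`e_{t+1} ≺ e_t`; dually, `e_s ≺ e_t` and `e_s` crossing `e_{s+1}` give `e_{s+1} ≺ e_t`.
Starting from `e_1 ≺ e_3`, these two moves order every non-adjacent pair of the path: `e_s ≺ e_t`
whenever `s + 2 ≤ t`. The same argument for the converse of `≺` shows that `e_3 ≺ e_1` would force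
`e_{2d} ≺ e_1`, which the hypothesis on `e_1` and `e_{2d}` excludes.
-/

theorem inter_comm {e f : ℕ × ℕ} : inter e f ↔ inter f e := Or.comm

theorem not_inter_of_eprec {e f : ℕ × ℕ} (h : eprec e f) : ¬ inter e f := by
  unfold eprec at h
  unfold inter
  omega

theorem eprec_or_eprec_of_not_inter {e f : ℕ × ℕ} (h₁ : e.1 ≠ f.1) (h₂ : e.2 ≠ f.2)
    (h : ¬ inter e f) : eprec e f ∨ eprec f e := by
  unfold inter at h
  unfold eprec
  omega

structure IsNoncrossingOrder (R : ℕ × ℕ → ℕ × ℕ → Prop) : Prop where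
  trans : ∀ {a b c}, R a b → R b c → R a c
  not_inter : ∀ {a b}, R a b → ¬ inter a b
  total : ∀ {a b}, a.1 ≠ b.1 → a.2 ≠ b.2 → ¬ inter a b → R a b ∨ R b a

theorem isNoncrossingOrder_eprec : IsNoncrossingOrder eprec where
  trans hab hbc := ⟨hab.1.trans hbc.1, hab.2.trans hbc.2⟩
  not_inter := not_inter_of_eprec
  total := eprec_or_eprec_of_not_inter

namespace IsNoncrossingOrder

variable {R : ℕ × ℕ → ℕ × ℕ → Prop}

theorem flip (hR : IsNoncrossingOrder R) : IsNoncrossingOrder (flip R) where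
  trans hab hbc := hR.trans hbc hab
  not_inter h := fun hi => hR.not_inter h (inter_comm.mp hi)
  total h₁ h₂ h := (hR.total h₁ h₂ h).symm

theorem rel_of_rel_of_inter (hR : IsNoncrossingOrder R) {a b c : ℕ × ℕ} (hab : R a b)
    (hbc : inter b c) (hac : R a c ∨ R c a) : R a c :=
  hac.resolve_right fun hca => hR.not_inter (hR.trans hca hab) (inter_comm.mp hbc)

end IsNoncrossingOrder

structure IsPathMatching (n : ℕ) (e : ℕ → ℕ × ℕ) : Prop where
  ne : ∀ s t, 1 ≤ s → s ≤ n → 1 ≤ t → t ≤ n → s ≠ t → (e s).1 ≠ (e t).1 ∧ (e s).2 ≠ (e t).2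
  inter_iff : ∀ s t, 1 ≤ s → s ≤ n → 1 ≤ t → t ≤ n → (inter (e s) (e t) ↔ (s + 1 = t ∨ t + 1 = s))

namespace IsPathMatching

variable {n : ℕ} {e : ℕ → ℕ × ℕ} {R : ℕ × ℕ → ℕ × ℕ → Prop}

theorem inter_succ (he : IsPathMatching n e) {s : ℕ} (hs : 1 ≤ s) (hsn : s + 1 ≤ n) :
    inter (e s) (e (s + 1)) :=
  (he.inter_iff s (s + 1) hs (by omega) (by omega) hsn).mpr (Or.inl rfl)

theorem rel_or_rel (he : IsPathMatching n e) (hR : IsNoncrossingOrder R) {s t : ℕ} (hs : 1 ≤ s)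
    (hst : s + 2 ≤ t) (ht : t ≤ n) : R (e s) (e t) ∨ R (e t) (e s) := by
  obtain ⟨h₁, h₂⟩ := he.ne s t hs (by omega) (by omega) ht (by omega)
  refine hR.total h₁ h₂ fun hi => ?_
  have := (he.inter_iff s t hs (by omega) (by omega) ht).mp hi
  omega

theorem rel_of_add_two_le (he : IsPathMatching n e) (hR : IsNoncrossingOrder R)
    (h₁₃ : R (e 1) (e 3)) {s t : ℕ} (hs : 1 ≤ s) (hst : s + 2 ≤ t) (ht : t ≤ n) :
    R (e s) (e t) := by
  have first : ∀ t, 3 ≤ t → t ≤ n → R (e 1) (e t) := by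
    intro t h3t
    induction t, h3t using Nat.le_induction with
    | base => exact fun _ => h₁₃
    | succ t h3t ih =>
      intro htn
      exact hR.rel_of_rel_of_inter (ih (by omega)) (he.inter_succ (by omega) htn)
        (he.rel_or_rel hR le_rfl (by omega) htn)
  induction s, hs using Nat.le_induction generalizing t with
  | base => exact first t hst ht
  | succ s hs ih =>
    exact hR.flip.rel_of_rel_of_inter (ih (by omega) ht) (he.inter_succ hs (by omega))
      (he.rel_or_rel hR (by omega) hst ht)

end IsPathMatching

theorem even_path_odd_indices_prec (d : ℕ) (hd : 2 ≤ d) (e : ℕ → ℕ × ℕ)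
    (hmatch : ∀ s t, 1 ≤ s → s ≤ 2 * d → 1 ≤ t → t ≤ 2 * d → s ≠ t →
      (e s).1 ≠ (e t).1 ∧ (e s).2 ≠ (e t).2)
    (hpath : ∀ s t, 1 ≤ s → s ≤ 2 * d → 1 ≤ t → t ≤ 2 * d →
      (inter (e s) (e t) ↔ (s + 1 = t ∨ t + 1 = s)))
    (hleft : (e 1).1 < (e (2 * d)).1) :
    ∀ t, 1 ≤ t → t ≤ d - 1 →
      eprec (e (2 * t - 1)) (e (2 * t + 1)) ∧
      eprec (e (2 * t - 1)) (e (2 * t + 2)) ∧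
      eprec (e (2 * t)) (e (2 * t + 2)) := by
  have he : IsPathMatching (2 * d) e := ⟨hmatch, hpath⟩
  have h₁₃ : eprec (e 1) (e 3) := by
    refine (he.rel_or_rel isNoncrossingOrder_eprec le_rfl le_rfl (by omega)).resolve_right
      fun h₃₁ => ?_
    have h : eprec (e (2 * d)) (e 1) :=
      he.rel_of_add_two_le isNoncrossingOrder_eprec.flip h₃₁ le_rfl (by omega) le_rfl
    exact absurd hleft h.1.not_gt
  intro t ht htd
  have ordered (s u : ℕ) (hs : 1 ≤ s) (hsu : s + 2 ≤ u) (hu : u ≤ 2 * d) : eprec (e s) (e u) :=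
    he.rel_of_add_two_le isNoncrossingOrder_eprec h₁₃ hs hsu hu
  refine ⟨ordered _ _ ?_ ?_ ?_, ordered _ _ ?_ ?_ ?_, ordered _ _ ?_ ?_ ?_⟩ <;> omega
end

section
/- With μ_γ and μ_𝒯 as defined, for every (i,q) ∈ [n_A] × [n_B]: μ_γ(i,q) = max{ μ_γ(i−1,q), max{ μ_𝒯(T_s) : T_s ∈ 𝒯, γ_A(T_s)=i and γ_B(T_s)=q } }. -/
structure Trap where
  lA : ℕ
  gA : ℕ
  lB : ℕ
  gB : ℕ
  hA : lA ≤ gA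
  hB : lB ≤ gB

def tprec (T T' : Trap) : Prop := T.gA < T'.lA ∧ T.gB < T'.lB

def contained (T : Trap) (i q : ℕ) : Prop :=
  1 ≤ T.lA ∧ T.gA ≤ i ∧ 1 ≤ T.lB ∧ T.gB ≤ q

noncomputable def muT (𝒯 : Finset Trap) (ω : Trap → NNReal) (Ts : Trap) : NNReal :=
  sSup {x | ∃ C : Finset Trap, ↑C ⊆ (𝒯 : Set Trap) ∧ IsChain tprec (↑C : Set Trap) ∧
    Ts ∈ C ∧ (∀ T ∈ C, T ≠ Ts → tprec T Ts) ∧ x = ∑ T ∈ C, ω T}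

noncomputable def muGamma (𝒯 : Finset Trap) (ω : Trap → NNReal) (i q : ℕ) : NNReal :=
  sSup {x | ∃ C : Finset Trap, ↑C ⊆ (𝒯 : Set Trap) ∧ IsChain tprec (↑C : Set Trap) ∧
    (∀ T ∈ C, contained T i q) ∧
    (∃ T ∈ C, T.gB = q ∧ ∀ T' ∈ C, T' ≠ T → tprec T' T) ∧ x = ∑ T ∈ C, ω T}

/-! A chain contained in `A[i] ∪ B[q]` whose top trapezoid ends at column `q` either has its top
inside `A[i-1] ∪ B[q]`, and then the whole chain does (everything below the top lies strictly to
its left), or its top `T` ends exactly at `(i, q)`, and then its weight is at most `μ_𝒯(T)`.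
Conversely every chain counted by `μ_𝒯(T)` for such a `T` lies in `A[i] ∪ B[q]`. -/

def IsChainWithMax (𝒯 C : Finset Trap) (T : Trap) : Prop :=
  ↑C ⊆ (𝒯 : Set Trap) ∧ IsChain tprec (↑C : Set Trap) ∧ T ∈ C ∧ ∀ T' ∈ C, T' ≠ T → tprec T' T

theorem contained_mono {T : Trap} {i i' q q' : ℕ} (h : contained T i q) (hi : i ≤ i')
    (hq : q ≤ q') : contained T i' q' :=
  ⟨h.1, h.2.1.trans hi, h.2.2.1, h.2.2.2.trans hq⟩

theorem IsChainWithMax.contained {𝒯 C : Finset Trap} {T : Trap}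
    (hC : IsChainWithMax 𝒯 C T) (hb : ∀ T ∈ 𝒯, 1 ≤ T.lA ∧ 1 ≤ T.lB) {i q : ℕ}
    (hi : T.gA ≤ i) (hq : T.gB ≤ q) : ∀ T' ∈ C, contained T' i q := by
  obtain ⟨hsub, -, -, hmax⟩ := hC
  intro T' hT'
  obtain ⟨hlA, hlB⟩ := hb T' (hsub hT')
  rcases eq_or_ne T' T with rfl | hne
  · exact ⟨hlA, hi, hlB, hq⟩
  · obtain ⟨hA, hB⟩ := hmax T' hT' hne
    exact ⟨hlA, by linarith [T'.hA, T.hA], hlB, by linarith [T'.hB, T.hB]⟩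

section Weights

variable {𝒯 : Finset Trap} {ω : Trap → NNReal}

theorem le_muT {C : Finset Trap} {T : Trap} (hC : IsChainWithMax 𝒯 C T) :
    ∑ T' ∈ C, ω T' ≤ muT 𝒯 ω T := by
  refine le_csSup ⟨∑ T' ∈ 𝒯, ω T', ?_⟩ ⟨C, hC.1, hC.2.1, hC.2.2.1, hC.2.2.2, rfl⟩
  rintro x ⟨C', hC', -, -, -, rfl⟩
  exact Finset.sum_le_sum_of_subset (Finset.coe_subset.mp hC')

theorem muT_le {T : Trap} {b : NNReal}
    (h : ∀ C : Finset Trap, IsChainWithMax 𝒯 C T → ∑ T' ∈ C, ω T' ≤ b) : muT 𝒯 ω T ≤ b :=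
  csSup_le' fun _ ⟨C, hsub, hchain, hT, hmax, hx⟩ => hx ▸ h C ⟨hsub, hchain, hT, hmax⟩

theorem muT_le_sum (T : Trap) : muT 𝒯 ω T ≤ ∑ T' ∈ 𝒯, ω T' :=
  muT_le fun _ hC => Finset.sum_le_sum_of_subset (Finset.coe_subset.mp hC.1)

theorem le_muGamma {C : Finset Trap} {T : Trap} {i q : ℕ} (hC : IsChainWithMax 𝒯 C T)
    (hq : T.gB = q) (hcont : ∀ T' ∈ C, contained T' i q) :
    ∑ T' ∈ C, ω T' ≤ muGamma 𝒯 ω i q := by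
  refine le_csSup ⟨∑ T' ∈ 𝒯, ω T', ?_⟩
    ⟨C, hC.1, hC.2.1, hcont, ⟨T, hC.2.2.1, hq, hC.2.2.2⟩, rfl⟩
  rintro x ⟨C', hC', -, -, -, rfl⟩
  exact Finset.sum_le_sum_of_subset (Finset.coe_subset.mp hC')

theorem muGamma_le {i q : ℕ} {b : NNReal}
    (h : ∀ (C : Finset Trap) (T : Trap), IsChainWithMax 𝒯 C T → T.gB = q →
      (∀ T' ∈ C, contained T' i q) → ∑ T' ∈ C, ω T' ≤ b) :
    muGamma 𝒯 ω i q ≤ b :=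
  csSup_le' fun _ ⟨C, hsub, hchain, hcont, ⟨T, hT, hq, hmax⟩, hx⟩ =>
    hx ▸ h C T ⟨hsub, hchain, hT, hmax⟩ hq hcont

theorem muGamma_mono {i i' : ℕ} (q : ℕ) (hi : i ≤ i') : muGamma 𝒯 ω i q ≤ muGamma 𝒯 ω i' q :=
  muGamma_le fun _ _ hC hq hcont =>
    le_muGamma hC hq fun T' hT' => contained_mono (hcont T' hT') hi le_rfl

end Weights

theorem muGamma_recurrence_general (𝒯 : Finset Trap) (ω : Trap → NNReal)
    (hb : ∀ T ∈ 𝒯, 1 ≤ T.lA ∧ 1 ≤ T.lB)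
    (i q : ℕ) :
    muGamma 𝒯 ω i q =
      max (muGamma 𝒯 ω (i - 1) q)
        (sSup {x | ∃ T ∈ 𝒯, T.gA = i ∧ T.gB = q ∧ x = muT 𝒯 ω T}) := by
  have hbdd : BddAbove {x | ∃ T ∈ 𝒯, T.gA = i ∧ T.gB = q ∧ x = muT 𝒯 ω T} :=
    ⟨∑ T' ∈ 𝒯, ω T', by rintro _ ⟨T, -, -, -, rfl⟩; exact muT_le_sum T⟩
  refine le_antisymm (muGamma_le fun C T hC hTq hcont => ?_)
    (max_le (muGamma_mono q (Nat.sub_le i 1)) (csSup_le' ?_))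
  · by_cases hle : T.gA ≤ i - 1
    · exact (le_muGamma hC hTq (hC.contained hb hle hTq.le)).trans (le_max_left _ _)
    · have hTi : T.gA = i := by have := (hcont T hC.2.2.1).2.1; omega
      exact (le_muT hC).trans <| (le_csSup hbdd ⟨T, hC.1 hC.2.2.1, hTi, hTq, rfl⟩).trans
        (le_max_right _ _)
  · rintro _ ⟨T, -, hTi, hTq, rfl⟩
    exact muT_le fun C hC => le_muGamma hC hTq (hC.contained hb hTi.le hTq.le)

theorem muGamma_recurrence (𝒯 : Finset Trap) (ω : Trap → NNReal)
    (hb : ∀ T ∈ 𝒯, 1 ≤ T.lA ∧ 1 ≤ T.lB)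
    (i q : ℕ) (hi : 1 ≤ i) (hq : 1 ≤ q) :
    muGamma 𝒯 ω i q =
      max (muGamma 𝒯 ω (i - 1) q)
        (sSup {x | ∃ T ∈ 𝒯, T.gA = i ∧ T.gB = q ∧ x = muT 𝒯 ω T}) :=
  muGamma_recurrence_general 𝒯 ω hb i q
end
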